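/- Let N ≥ 2, let Ω be a convex bounded domain in ℝ^d whose boundary has Lebesgue measure zero, let μ be normalized Lebesgue measure on Ω, and let u_1,…,u_{N−1} : Ω → ℝ^d be bounded measurable vector fields. If the (N−1)-tuple (u_1,…,u_{N−1}) is jointly N-monotone on Ω ∖ Ω_0 for some set Ω_0 of measure zero, then for every σ-invariant probability measure π on Ω^N with first marginal μ, ∫_{Ω^N} ∑_{ℓ=1}^{N−1} ⟨u_ℓ(x_1), x_1 − x_{ℓ+1}⟩ dπ(x_1,…,x_N) ≥ 0; moreover this integral equals 0 when π is the pushforward of μ by the diagonal map x ↦ (x,x,…,x), so the infimum over all such π is zero and is attained by the diagonal measure. -/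

import Mathlib

open MeasureTheory Finset
open scoped BigOperators RealInnerProductSpace

noncomputable section

/-- `ℝ^d` as a Euclidean space. -/
abbrev Ed (d : ℕ) := EuclideanSpace ℝ (Fin d)

/-- The cyclic permutation `σ(x₁,…,x_N) = (x₂,…,x_N,x₁)` acting on tuples. -/
def cyc {N : ℕ} {α : Type*} (x : Fin N → α) : Fin N → α := x ∘ finRotate N

/-- The `(N-1)`-tuple `(u 1, …, u (N-1))` is jointly `N`-monotone on `Ω`:
for every cycle `x 1, …, x (2N-1)` of points of `Ω` with `x (N+i) = x i` for
`1 ≤ i ≤ N-1`, one has `∑_{i=1}^{N} ∑_{ℓ=1}^{N-1} ⟨u ℓ (x i), x i - x (i+ℓ)⟩ ≥ 0`. -/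
def JointlyNMonotone (N : ℕ) {d : ℕ} (Ω : Set (Ed d)) (u : ℕ → Ed d → Ed d) : Prop :=
  ∀ x : ℕ → Ed d,
    (∀ i, 1 ≤ i → i ≤ 2 * N - 1 → x i ∈ Ω) →
    (∀ i, 1 ≤ i → i ≤ N - 1 → x (N + i) = x i) →
    0 ≤ ∑ i ∈ Icc 1 N, ∑ ℓ ∈ Icc 1 (N - 1), ⟪u ℓ (x i), x i - x (i + ℓ)⟫

/-- `H` is `N`-sub-antisymmetric on `Ω^N` : `∑_{i=0}^{N-1} H(σ^i x) ≤ 0` on `Ω^N`. -/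
def NSubAntisymmetric (N : ℕ) {d : ℕ} (Ω : Set (Ed d)) (H : (Fin N → Ed d) → ℝ) : Prop :=
  ∀ x : Fin N → Ed d, (∀ i, x i ∈ Ω) → ∑ i ∈ range N, H (cyc^[i] x) ≤ 0

/-- `H` is `N`-antisymmetric on `Ω^N` : `∑_{i=0}^{N-1} H(σ^i x) = 0` on `Ω^N`. -/
def NAntisymmetric (N : ℕ) {d : ℕ} (Ω : Set (Ed d)) (H : (Fin N → Ed d) → ℝ) : Prop :=
  ∀ x : Fin N → Ed d, (∀ i, x i ∈ Ω) → ∑ i ∈ range N, H (cyc^[i] x) = 0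

/-- `u` is `N`-cyclically monotone on `Ω`: for every cycle `x 1, …, x N, x (N+1) = x 1`
of points of `Ω`, `∑_{i=1}^{N} ⟨u (x i), x i - x (i+1)⟩ ≥ 0`. -/
def NCyclicallyMonotone (N : ℕ) {d : ℕ} (Ω : Set (Ed d)) (u : Ed d → Ed d) : Prop :=
  ∀ x : ℕ → Ed d,
    (∀ i, 1 ≤ i → i ≤ N → x i ∈ Ω) → x (N + 1) = x 1 →
    0 ≤ ∑ i ∈ Icc 1 N, ⟪u (x i), x i - x (i + 1)⟫

open Fin.NatCast

/-!
Summing the cost `c` over the cyclic orbit of a point of `Ω^N` produces exactly the cyclic sum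
that joint `N`-monotonicity controls, so `∑_{i<N} c ∘ σ^i ≥ 0` almost everywhere: every marginal
of a `σ`-invariant `π` is `μ`, which does not charge the exceptional set `Ω₀`. Since `σ` preserves
`π`, each `c ∘ σ^i` has the same integral as `c`, hence `N ∫ c dπ ≥ 0`. On the diagonal `c`
vanishes identically, and the diagonal measure is admissible.
-/

theorem cyc_iterate_apply {α : Type*} {N : ℕ} [NeZero N] (k : ℕ) (x : Fin N → α) (j : Fin N) :
    cyc^[k] x j = x (j + k) := by
  induction k generalizing x with
  | zero => simp
  | succ k ih =>
    rw [Function.iterate_succ_apply, ih]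
    show x (finRotate N (j + k)) = _
    rw [finRotate_apply]
    push_cast
    abel_nf

theorem measurable_cyc {N : ℕ} {α : Type*} [MeasurableSpace α] :
    Measurable (cyc : (Fin N → α) → (Fin N → α)) :=
  measurable_pi_lambda _ fun _ => measurable_pi_apply _

section Birkhoff

variable {α : Type*} [MeasurableSpace α] {μ : Measure α} {f : α → α} {g : α → ℝ}

theorem MeasureTheory.MeasurePreserving.integral_birkhoffSum (hf : MeasurePreserving f μ μ)
    (hg : Integrable g μ) (n : ℕ) : ∫ x, birkhoffSum f g n x ∂μ = n * ∫ x, g x ∂μ := by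
  have hterm (k : ℕ) : ∫ x, g (f^[k] x) ∂μ = ∫ x, g x ∂μ := by
    have hg' : AEStronglyMeasurable g (Measure.map f^[k] μ) := by
      rw [(hf.iterate k).map_eq]
      exact hg.aestronglyMeasurable
    rw [← integral_map (hf.iterate k).measurable.aemeasurable hg', (hf.iterate k).map_eq]
  have hint (k : ℕ) : Integrable (fun x => g (f^[k] x)) μ :=
    (hf.iterate k).integrable_comp_of_integrable hg
  simp only [birkhoffSum]
  rw [integral_finsetSum _ fun k _ => hint k]
  simp [hterm]

theorem MeasureTheory.MeasurePreserving.integral_nonneg_of_ae_birkhoffSum_nonneg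
    (hf : MeasurePreserving f μ μ) (hg : Integrable g μ) {n : ℕ} (hn : n ≠ 0)
    (h : ∀ᵐ x ∂μ, 0 ≤ birkhoffSum f g n x) : 0 ≤ ∫ x, g x ∂μ := by
  have hsum := integral_nonneg_of_ae h
  rw [hf.integral_birkhoffSum hg] at hsum
  exact (mul_nonneg_iff_of_pos_left (Nat.cast_pos.2 (Nat.pos_of_ne_zero hn))).1 hsum

end Birkhoff

section Marginals

variable {α : Type*} [MeasurableSpace α] {N : ℕ} [NeZero N] {π : Measure (Fin N → α)}
  {μ : Measure α}

theorem map_eval_eq_of_map_cyc_eq (hcyc : Measure.map cyc π = π)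
    (h0 : Measure.map (fun y : Fin N → α => y 0) π = μ) (i : Fin N) :
    Measure.map (fun y : Fin N → α => y i) π = μ := by
  have hσ : MeasurePreserving cyc π π := ⟨measurable_cyc, hcyc⟩
  have he : (fun y : Fin N → α => y i) = (fun y => y 0) ∘ cyc^[i] := by
    funext y
    simp [cyc_iterate_apply]
  rw [he, ← Measure.map_map (measurable_pi_apply 0) (hσ.iterate i).measurable,
    (hσ.iterate i).map_eq, h0]

theorem ae_forall_mem_of_map_cyc_eq (hcyc : Measure.map cyc π = π)
    (h0 : Measure.map (fun y : Fin N → α => y 0) π = μ) {s : Set α} (hs : ∀ᵐ x ∂μ, x ∈ s) :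
    ∀ᵐ y ∂π, ∀ i, y i ∈ s :=
  ae_all_iff.2 fun i => ae_of_ae_map (measurable_pi_apply i).aemeasurable <|
    (map_eval_eq_of_map_cyc_eq hcyc h0 i).symm ▸ hs

end Marginals

section DiagonalMeasure

variable {α ι : Type*} [MeasurableSpace α] (μ : Measure α)

theorem measurable_pi_const : Measurable fun x : α => fun _ : ι => x :=
  measurable_pi_lambda _ fun _ => measurable_id

theorem map_cyc_map_const {N : ℕ} :
    Measure.map cyc (Measure.map (fun x : α => fun _ : Fin N => x) μ) =
      Measure.map (fun x : α => fun _ : Fin N => x) μ := by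
  rw [Measure.map_map measurable_cyc measurable_pi_const]
  rfl

theorem map_eval_map_const (i : ι) :
    Measure.map (fun y : ι → α => y i) (Measure.map (fun x : α => fun _ : ι => x) μ) = μ := by
  rw [Measure.map_map (measurable_pi_apply i) measurable_pi_const]
  exact Measure.map_id

theorem ae_map_const_forall_mem [Countable ι] {s : Set α} (hs : MeasurableSet s)
    (h : ∀ᵐ x ∂μ, x ∈ s) :
    ∀ᵐ y ∂(Measure.map (fun x : α => fun _ : ι => x) μ), ∀ i, y i ∈ s := by
  rw [ae_map_iff measurable_pi_const.aemeasurable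
    (by simpa only [Set.ofPred_forall] using .iInter fun i => measurable_pi_apply i hs)]
  exact h.mono fun x hx _ => hx

end DiagonalMeasure

def cyclicCost {d : ℕ} (N : ℕ) [NeZero N] (u : ℕ → Ed d → Ed d) (y : Fin N → Ed d) : ℝ :=
  ∑ ℓ ∈ Icc 1 (N - 1), ⟪u ℓ (y 0), y 0 - y (ℓ : Fin N)⟫

section Cost

variable {d N : ℕ} [NeZero N] {u : ℕ → Ed d → Ed d}

theorem cyclicCost_const (x : Ed d) : cyclicCost N u (fun _ => x) = 0 := by
  simp [cyclicCost]

theorem measurable_cyclicCost (hu : ∀ ℓ ∈ Icc 1 (N - 1), Measurable (u ℓ)) :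
    Measurable (cyclicCost N u) :=
  Finset.measurable_sum _ fun ℓ hℓ => ((hu ℓ hℓ).comp (measurable_pi_apply 0)).inner
    ((measurable_pi_apply 0).sub (measurable_pi_apply _))

theorem integral_cyclicCost_map_const (hu : ∀ ℓ ∈ Icc 1 (N - 1), Measurable (u ℓ))
    (μ : Measure (Ed d)) :
    ∫ y, cyclicCost N u y ∂(Measure.map (fun x : Ed d => fun _ : Fin N => x) μ) = 0 := by
  rw [integral_map measurable_pi_const.aemeasurable
    (measurable_cyclicCost hu).aestronglyMeasurable]
  simp [cyclicCost_const]

theorem exists_norm_cyclicCost_le {Ω : Set (Ed d)} (hΩ : Bornology.IsBounded Ω)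
    (hu : ∀ ℓ ∈ Icc 1 (N - 1), ∃ C : ℝ, ∀ x ∈ Ω, ‖u ℓ x‖ ≤ C) :
    ∃ B, ∀ y : Fin N → Ed d, (∀ i, y i ∈ Ω) → ‖cyclicCost N u y‖ ≤ B := by
  obtain ⟨R, hR⟩ := hΩ.exists_norm_le
  choose! C hC using hu
  refine ⟨∑ ℓ ∈ Icc 1 (N - 1), C ℓ * (R + R), fun y hy => (norm_sum_le _ _).trans ?_⟩
  refine Finset.sum_le_sum fun ℓ hℓ => (norm_inner_le_norm _ _).trans ?_
  exact mul_le_mul (hC ℓ hℓ _ (hy 0)) ((norm_sub_le _ _).trans (add_le_add (hR _ (hy 0))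
    (hR _ (hy _)))) (norm_nonneg _) ((norm_nonneg _).trans (hC ℓ hℓ _ (hy 0)))

theorem JointlyNMonotone.birkhoffSum_cyclicCost_nonneg {Ω : Set (Ed d)}
    (hmono : JointlyNMonotone N Ω u) {y : Fin N → Ed d} (hy : ∀ i, y i ∈ Ω) :
    0 ≤ birkhoffSum cyc (cyclicCost N u) N y := by
  -- the cycle `x i = y (i - 1)`, indices mod `N`
  have hcycle := hmono (fun i => y ((i - 1 : ℕ) : Fin N)) (fun i _ _ => hy _) fun i hi _ => by
    show y ((N + i - 1 : ℕ) : Fin N) = y ((i - 1 : ℕ) : Fin N)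
    rw [show N + i - 1 = i - 1 + N by omega, Nat.cast_add, Fin.natCast_self, add_zero]
  refine hcycle.trans_eq ?_
  rw [← Finset.Ico_add_one_right_eq_Icc, Finset.sum_Ico_eq_sum_range, Nat.add_sub_cancel]
  refine Finset.sum_congr rfl fun i _ => Finset.sum_congr rfl fun ℓ _ => ?_
  simp only [show 1 + i - 1 = i by omega, show 1 + i + ℓ - 1 = i + ℓ by omega,
    cyc_iterate_apply, zero_add, Nat.cast_add, add_comm (i : Fin N)]

theorem integral_cyclicCost_nonneg {Ω : Set (Ed d)} (hΩ : Bornology.IsBounded Ω)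
    (hu_meas : ∀ ℓ ∈ Icc 1 (N - 1), Measurable (u ℓ))
    (hu_bdd : ∀ ℓ ∈ Icc 1 (N - 1), ∃ C : ℝ, ∀ x ∈ Ω, ‖u ℓ x‖ ≤ C)
    (hmono : JointlyNMonotone N Ω u) {μ : Measure (Ed d)} (hμ : ∀ᵐ x ∂μ, x ∈ Ω)
    {π : Measure (Fin N → Ed d)} [IsFiniteMeasure π] (hcyc : Measure.map cyc π = π)
    (h0 : Measure.map (fun y : Fin N → Ed d => y 0) π = μ) :
    0 ≤ ∫ y, cyclicCost N u y ∂π := by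
  have hπ := ae_forall_mem_of_map_cyc_eq hcyc h0 hμ
  obtain ⟨B, hB⟩ := exists_norm_cyclicCost_le hΩ hu_bdd
  have hint : Integrable (cyclicCost N u) π :=
    .of_bound (measurable_cyclicCost hu_meas).aestronglyMeasurable B (hπ.mono hB)
  exact MeasurePreserving.integral_nonneg_of_ae_birkhoffSum_nonneg ⟨measurable_cyc, hcyc⟩ hint
    (NeZero.ne N) (hπ.mono fun y hy => hmono.birkhoffSum_cyclicCost_nonneg hy)

end Cost

theorem statement10_general {d : ℕ} (N : ℕ) [NeZero N]
    (Ω : Set (Ed d)) (hΩopen : IsOpen Ω)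
    (hΩbdd : Bornology.IsBounded Ω) (hΩne : Ω.Nonempty)
    -- `μ` is normalized Lebesgue measure on `Ω`
    (μ : Measure (Ed d)) (hμ : μ = (volume Ω)⁻¹ • volume.restrict Ω)
    (u : ℕ → Ed d → Ed d)
    (humeas : ∀ ℓ ∈ Icc 1 (N - 1), Measurable (u ℓ))
    (hubdd : ∀ ℓ ∈ Icc 1 (N - 1), ∃ C : ℝ, ∀ x ∈ Ω, ‖u ℓ x‖ ≤ C)
    -- `(u 1, …, u (N-1))` is jointly `N`-monotone off a set `Ω₀` of measure zero
    (Ω₀ : Set (Ed d)) (hΩ₀ : volume Ω₀ = 0)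
    (hmono : JointlyNMonotone N (Ω \ Ω₀) u) :
    -- for every `σ`-invariant probability measure `π` on `Ω^N` with first marginal `μ`,
    -- the Monge–Kantorovich cost is nonnegative
    (∀ π : Measure (Fin N → Ed d), IsProbabilityMeasure π →
      π {y : Fin N → Ed d | ∀ i, y i ∈ Ω}ᶜ = 0 →
      Measure.map cyc π = π →
      Measure.map (fun y : Fin N → Ed d => y 0) π = μ →
      0 ≤ ∫ y, ∑ ℓ ∈ Icc 1 (N - 1), ⟪u ℓ (y 0), y 0 - y (ℓ : Fin N)⟫ ∂π) ∧
    -- the cost vanishes for the pushforward of `μ` by the diagonal map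
    (∫ y, ∑ ℓ ∈ Icc 1 (N - 1), ⟪u ℓ (y 0), y 0 - y (ℓ : Fin N)⟫
        ∂(Measure.map (fun x : Ed d => fun _ : Fin N => x) μ) = 0) ∧
    -- hence the infimum over all such `π` is zero and is attained
    IsLeast {r : ℝ | ∃ π : Measure (Fin N → Ed d), IsProbabilityMeasure π ∧
      π {y : Fin N → Ed d | ∀ i, y i ∈ Ω}ᶜ = 0 ∧
      Measure.map cyc π = π ∧
      Measure.map (fun y : Fin N → Ed d => y 0) π = μ ∧
      r = ∫ y, ∑ ℓ ∈ Icc 1 (N - 1), ⟪u ℓ (y 0), y 0 - y (ℓ : Fin N)⟫ ∂π} 0 := by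
  have hμ_prob : IsProbabilityMeasure μ := by
    constructor
    simp [hμ, ENNReal.inv_mul_cancel (hΩopen.measure_pos volume hΩne).ne'
      hΩbdd.measure_lt_top.ne]
  have hμ_ae : ∀ᵐ x ∂μ, x ∈ Ω \ Ω₀ := by
    rw [hμ]
    refine Measure.ae_smul_measure ?_ _
    filter_upwards [ae_restrict_mem hΩopen.measurableSet,
      ae_restrict_of_ae (measure_eq_zero_iff_ae_notMem.1 hΩ₀)] with x hxΩ hxΩ₀
    exact ⟨hxΩ, hxΩ₀⟩
  have hcost_nonneg (π : Measure (Fin N → Ed d)) (_ : IsProbabilityMeasure π)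
      (hcyc : Measure.map cyc π = π) (h0 : Measure.map (fun y : Fin N → Ed d => y 0) π = μ) :
      0 ≤ ∫ y, cyclicCost N u y ∂π :=
    integral_cyclicCost_nonneg (hΩbdd.subset Set.sdiff_subset) humeas
      (fun ℓ hℓ => (hubdd ℓ hℓ).imp fun _ hC x hx => hC x hx.1) hmono hμ_ae hcyc h0
  have hdiag_cost := integral_cyclicCost_map_const humeas μ
  refine ⟨fun π hπ _ => hcost_nonneg π hπ, hdiag_cost,
    ⟨_, Measure.isProbabilityMeasure_map measurable_pi_const.aemeasurable,
      ae_map_const_forall_mem μ hΩopen.measurableSet (hμ_ae.mono fun _ hx => hx.1),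
      map_cyc_map_const μ, map_eval_map_const μ 0, hdiag_cost.symm⟩, ?_⟩
  rintro r ⟨π, hπ, -, hcyc, h0, rfl⟩
  exact hcost_nonneg π hπ hcyc h0

theorem statement10 {d : ℕ} (N : ℕ) [NeZero N] (hN : 2 ≤ N)
    (Ω : Set (Ed d)) (hΩopen : IsOpen Ω) (hΩconv : Convex ℝ Ω)
    (hΩbdd : Bornology.IsBounded Ω) (hΩne : Ω.Nonempty)
    -- the boundary of `Ω` has Lebesgue measure zero
    (hΩfr : volume (frontier Ω) = 0)
    -- `μ` is normalized Lebesgue measure on `Ω`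
    (μ : Measure (Ed d)) (hμ : μ = (volume Ω)⁻¹ • volume.restrict Ω)
    (u : ℕ → Ed d → Ed d)
    (humeas : ∀ ℓ ∈ Icc 1 (N - 1), Measurable (u ℓ))
    (hubdd : ∀ ℓ ∈ Icc 1 (N - 1), ∃ C : ℝ, ∀ x ∈ Ω, ‖u ℓ x‖ ≤ C)
    -- `(u 1, …, u (N-1))` is jointly `N`-monotone off a set `Ω₀` of measure zero
    (Ω₀ : Set (Ed d)) (hΩ₀ : volume Ω₀ = 0)
    (hmono : JointlyNMonotone N (Ω \ Ω₀) u) :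
    -- for every `σ`-invariant probability measure `π` on `Ω^N` with first marginal `μ`,
    -- the Monge–Kantorovich cost is nonnegative
    (∀ π : Measure (Fin N → Ed d), IsProbabilityMeasure π →
      π {y : Fin N → Ed d | ∀ i, y i ∈ Ω}ᶜ = 0 →
      Measure.map cyc π = π →
      Measure.map (fun y : Fin N → Ed d => y 0) π = μ →
      0 ≤ ∫ y, ∑ ℓ ∈ Icc 1 (N - 1), ⟪u ℓ (y 0), y 0 - y (ℓ : Fin N)⟫ ∂π) ∧
    -- the cost vanishes for the pushforward of `μ` by the diagonal map
    (∫ y, ∑ ℓ ∈ Icc 1 (N - 1), ⟪u ℓ (y 0), y 0 - y (ℓ : Fin N)⟫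
        ∂(Measure.map (fun x : Ed d => fun _ : Fin N => x) μ) = 0) ∧
    -- hence the infimum over all such `π` is zero and is attained
    IsLeast {r : ℝ | ∃ π : Measure (Fin N → Ed d), IsProbabilityMeasure π ∧
      π {y : Fin N → Ed d | ∀ i, y i ∈ Ω}ᶜ = 0 ∧
      Measure.map cyc π = π ∧
      Measure.map (fun y : Fin N → Ed d => y 0) π = μ ∧
      r = ∫ y, ∑ ℓ ∈ Icc 1 (N - 1), ⟪u ℓ (y 0), y 0 - y (ℓ : Fin N)⟫ ∂π} 0 :=
  statement10_general N Ω hΩopen hΩbdd hΩne μ hμ u humeas hubdd Ω₀ hΩ₀ hmono
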